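/- arXiv:2208.03858 — 9 statements merged into one kernel-verified Lean document; each statement's English description precedes it below -/
import Mathlib

section
/- Let n ≥ q ≥ 1 be integers and let v ∈ ℝⁿ have all entries positive. For every X ∈ B_v and every column index j, all nonzero entries of the j-th column of X have the same sign; that is, there do not exist row indices i and i′ with X_{ij} > 0 and X_{i′j} < 0. -/
open Matrix

/-- For every `X ∈ B_v` and every column index `j`, all nonzero entries of the
`j`-th column of `X` have the same sign: there are no rows `i, i'` with `X i j > 0` and
`X i' j < 0`. Here `B_v` is the set of `n × q` real matrices with orthonormal columns,
exactly `n` nonzero entries, and `v` in the column space. -/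
theorem stmt_0 (n q : ℕ) (hq : 1 ≤ q) (hnq : q ≤ n)
    (v : Fin n → ℝ) (hv : ∀ i, 0 < v i)
    (X : Matrix (Fin n) (Fin q) ℝ)
    (hX : X ∈ ({Y : Matrix (Fin n) (Fin q) ℝ | Yᵀ * Y = 1 ∧
      {p : Fin n × Fin q | Y p.1 p.2 ≠ 0}.ncard = n ∧
      ∃ c : Fin q → ℝ, Y *ᵥ c = v} : Set (Matrix (Fin n) (Fin q) ℝ)))
    (j : Fin q) :
    ¬ ∃ i i' : Fin n, 0 < X i j ∧ X i' j < 0 := by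
  classical
  obtain ⟨-, hcard, c, hc⟩ := hX
  rintro ⟨i, i', hpos, hneg⟩
  set S := {p : Fin n × Fin q | X p.1 p.2 ≠ 0} with hS
  -- each row has a nonzero entry
  have hrow : ∀ i0 : Fin n, ∃ k, X i0 k ≠ 0 := by
    intro i0
    by_contra h
    push_neg at h
    have h0 : (X *ᵥ c) i0 = 0 := by
      simp [mulVec, dotProduct, h]
    rw [hc] at h0
    exact (hv i0).ne' h0
  have hsurj : Function.Surjective (fun p : S => p.1.1) := by
    intro i0
    obtain ⟨k, hk⟩ := hrow i0
    exact ⟨⟨(i0, k), hk⟩, rfl⟩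
  haveI : Fintype S := (Set.toFinite S).fintype
  have hcard' : Fintype.card S = n := by
    rw [← Set.toFinset_card, ← Set.ncard_eq_toFinset_card']
    exact hcard
  have hinj : Function.Injective (fun p : S => p.1.1) := by
    have := (Fintype.bijective_iff_surjective_and_card (fun p : S => p.1.1)).2
      ⟨hsurj, by simp [hcard']⟩
    exact this.injective
  have huniq : ∀ (i0 : Fin n) (k l : Fin q), X i0 k ≠ 0 → X i0 l ≠ 0 → k = l := by
    intro i0 k l hk hl
    have : (⟨(i0, k), hk⟩ : S) = ⟨(i0, l), hl⟩ := hinj rfl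
    exact congrArg Prod.snd (Subtype.ext_iff.mp this)
  have key : ∀ i0 : Fin n, X i0 j ≠ 0 → v i0 = X i0 j * c j := by
    intro i0 h0
    rw [← hc]
    show (∑ k, X i0 k * c k) = X i0 j * c j
    refine Finset.sum_eq_single j ?_ (by simp)
    intro b _ hb
    have : X i0 b = 0 := by
      by_contra hXb
      exact hb (huniq i0 b j hXb h0)
    simp [this]
  have k1 := key i hpos.ne'
  have k2 := key i' hneg.ne
  nlinarith [hv i, hv i', mul_pos (hv i) (hv i'), sq_nonneg (c j)]
end

section
/- Let n ≥ q ≥ 1 be integers, let v ∈ ℝⁿ have all entries positive, and let f : ℝ^{n×q} → ℝ satisfy f(X D_i) = f(X) for every X ∈ ℝ^{n×q} and every i ∈ {1,…,q}, where D_i is the diagonal matrix whose i-th diagonal entry is −1 and all other diagonal entries are 1. For X ∈ B_v define ϑ(X) = X D, where D is the diagonal matrix with D_{jj} = −1 if all nonzero entries of the j-th column of X are negative and D_{jj} = 1 otherwise. Then X_* ∈ B_v satisfies f(X_*) ≤ f(Y) for all Y ∈ B_v if and only if ϑ(X_*) ∈ A_v and f(ϑ(X_*)) ≤ f(Z) for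 all Z ∈ A_v. -/
open Matrix

/-- `A_v`: matrices with orthonormal columns, all entries nonnegative, `v` in column space. -/
def Av (n q : ℕ) (v : Fin n → ℝ) : Set (Matrix (Fin n) (Fin q) ℝ) :=
  {X | Xᵀ * X = 1 ∧ (∀ i j, 0 ≤ X i j) ∧ ∃ c : Fin q → ℝ, X *ᵥ c = v}

/-- `B_v`: matrices with orthonormal columns, exactly `n` nonzero entries, `v` in column space. -/
def Bv (n q : ℕ) (v : Fin n → ℝ) : Set (Matrix (Fin n) (Fin q) ℝ) :=
  {X | Xᵀ * X = 1 ∧ {p : Fin n × Fin q | X p.1 p.2 ≠ 0}.ncard = n ∧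
    ∃ c : Fin q → ℝ, X *ᵥ c = v}

open scoped Classical in
/-- `ϑ(X) = X D` where `D` is diagonal with `D_{jj} = -1` if all nonzero entries of the `j`-th
column of `X` are negative, and `D_{jj} = 1` otherwise. -/
noncomputable def theta {n q : ℕ} (X : Matrix (Fin n) (Fin q) ℝ) :
    Matrix (Fin n) (Fin q) ℝ :=
  X * Matrix.diagonal (fun j => if (∀ i, X i j ≠ 0 → X i j < 0) then (-1 : ℝ) else 1)

/-!
Since `v > 0` lies in the column space, every row of a matrix in `B_v` or `A_v` has a nonzero
entry. In `B_v` the count of `n` nonzero entries then leaves exactly one per row, so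
`v_i = (X c)_i = X_{ij} c_j` for that entry: the nonzero entries of column `j` all have the sign
of `c_j`, and `ϑ` (flipping the negative columns) lands in `A_v`. Conversely, nonnegative
orthogonal columns have disjoint supports, so `A_v ⊆ B_v`. As `ϑ` is right multiplication by a
`±1` diagonal matrix, `f ∘ ϑ = f`, so both problems have the same optimal value.
-/

open Matrix Finset

section SignFlips

variable {m ι R α : Type*} [Fintype ι] [DecidableEq ι]

theorem apply_mul_diagonal_eq_of_flip_invariant [Ring R] (f : Matrix m ι R → α)
    (hf : ∀ (X : Matrix m ι R) (i : ι),
      f (X * diagonal (fun j => if j = i then (-1 : R) else 1)) = f X)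
    {d : ι → R} (hd : ∀ j, d j = 1 ∨ d j = -1) (X : Matrix m ι R) :
    f (X * diagonal d) = f X := by
  classical
  have flip_set : ∀ (s : Finset ι) (X : Matrix m ι R),
      f (X * diagonal (fun j => if j ∈ s then (-1 : R) else 1)) = f X := by
    intro s
    induction s using Finset.induction_on with
    | empty => simp
    | insert a s ha ih =>
      intro X
      have hsplit : diagonal (fun j => if j ∈ insert a s then (-1 : R) else 1) =
          diagonal (fun j => if j ∈ s then (-1 : R) else 1) *
            diagonal (fun j => if j = a then (-1 : R) else 1) := by
        rw [diagonal_mul_diagonal]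
        congr 1
        funext j
        by_cases hj : j = a
        · simp [hj, ha]
        · simp [hj]
      rw [hsplit, ← Matrix.mul_assoc, hf, ih]
  have hd_eq : d = fun j => if j ∈ ({j | d j = -1} : Finset ι) then (-1 : R) else 1 := by
    funext j
    by_cases h : d j = -1
    · simp [h]
    · simp [(hd j).resolve_right h]
  rw [hd_eq]
  exact flip_set _ X

theorem transpose_mul_self_mul_diagonal [Fintype m] [CommRing R] {X : Matrix m ι R}
    (hX : Xᵀ * X = 1) {d : ι → R} (hd : ∀ j, d j * d j = 1) :
    (X * diagonal d)ᵀ * (X * diagonal d) = 1 := by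
  rw [transpose_mul, diagonal_transpose, Matrix.mul_assoc, ← Matrix.mul_assoc Xᵀ, hX,
    Matrix.one_mul, diagonal_mul_diagonal, ← diagonal_one]
  exact congrArg _ (funext hd)

theorem mul_diagonal_mulVec_mul [Ring R] (X : Matrix m ι R) {d : ι → R}
    (hd : ∀ j, d j * d j = 1) (c : ι → R) :
    (X * diagonal d) *ᵥ (d * c) = X *ᵥ c := by
  have hcancel : diagonal d *ᵥ (d * c) = c := by
    ext j
    simp [mulVec_diagonal, ← mul_assoc, hd j]
  rw [← mulVec_mulVec, hcancel]

end SignFlips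

section Support

open scoped Classical

variable {m ι : Type*}

theorem ncard_ne_zero_eq_card_iff [Fintype m] [Fintype ι] {X : Matrix m ι ℝ} (hrow : ∀ i, ∃ j, X i j ≠ 0) :
    {p : m × ι | X p.1 p.2 ≠ 0}.ncard = Fintype.card m ↔ ∀ i, ∃! j, X i j ≠ 0 := by
  have hcount : {p : m × ι | X p.1 p.2 ≠ 0}.ncard = ∑ i, #{j | X i j ≠ 0} := by
    rw [Set.ncard_eq_toFinset_card', Set.toFinset_ofPred, card_filter, Fintype.sum_prod_type]
    simp only [card_filter]
  have hpos : ∀ i ∈ univ, 1 ≤ #{j | X i j ≠ 0} := fun i _ => by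
    obtain ⟨j, hj⟩ := hrow i
    exact card_pos.mpr ⟨j, by simpa using hj⟩
  rw [hcount, Fintype.card_eq_sum_ones, eq_comm, sum_eq_sum_iff_of_le hpos]
  simp [eq_comm (a := 1), card_eq_one_iff_existsUnique]

theorem exists_ne_zero_of_mulVec_eq [Fintype ι] {X : Matrix m ι ℝ} {c : ι → ℝ} {v : m → ℝ}
    (hc : X *ᵥ c = v) {i : m} (hv : v i ≠ 0) : ∃ j, X i j ≠ 0 := by
  by_contra! h
  exact hv (by simp [← hc, mulVec, dotProduct, h])

theorem eq_of_ne_zero_of_nonneg_of_orthogonal [Fintype m] [DecidableEq ι] {X : Matrix m ι ℝ}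
    (hX : Xᵀ * X = 1) (hnonneg : ∀ i j, 0 ≤ X i j) {i : m} {j j' : ι}
    (hj : X i j ≠ 0) (hj' : X i j' ≠ 0) : j = j' := by
  by_contra hne
  have hsum : ∑ k, X k j * X k j' = 0 := by
    simpa [mul_apply, one_apply_ne hne] using congrFun (congrFun hX j) j'
  rw [sum_eq_zero_iff_of_nonneg fun k _ => mul_nonneg (hnonneg k j) (hnonneg k j')] at hsum
  exact mul_ne_zero hj hj' (hsum i (mem_univ i))

theorem mulVec_apply_eq_of_existsUnique [Fintype ι] {X : Matrix m ι ℝ} {i : m} {j : ι}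
    (huniq : ∃! j, X i j ≠ 0) (hj : X i j ≠ 0) (c : ι → ℝ) :
    (X *ᵥ c) i = X i j * c j := by
  refine sum_eq_single j (fun j' _ hj' => ?_) (by simp)
  show X i j' * c j' = 0
  rw [not_ne_iff.mp fun h => hj' (huniq.unique h hj), zero_mul]

end Support

section Theta

variable {n q : ℕ}

open scoped Classical in
noncomputable def columnSign (X : Matrix (Fin n) (Fin q) ℝ) (j : Fin q) : ℝ :=
  if ∀ i, X i j ≠ 0 → X i j < 0 then -1 else 1

theorem theta_eq_mul_diagonal_columnSign (X : Matrix (Fin n) (Fin q) ℝ) :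
    theta X = X * diagonal (columnSign X) := rfl

theorem columnSign_eq_one_or_neg_one (X : Matrix (Fin n) (Fin q) ℝ) (j : Fin q) :
    columnSign X j = 1 ∨ columnSign X j = -1 := by
  unfold columnSign
  split_ifs <;> simp

theorem columnSign_mul_self (X : Matrix (Fin n) (Fin q) ℝ) (j : Fin q) :
    columnSign X j * columnSign X j = 1 := by
  rcases columnSign_eq_one_or_neg_one X j with h | h <;> simp [h]

theorem theta_nonneg_of_sign_coherent {X : Matrix (Fin n) (Fin q) ℝ} {c : Fin q → ℝ}
    (hc : ∀ i j, X i j ≠ 0 → 0 < X i j * c j) (i : Fin n) (j : Fin q) :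
    0 ≤ theta X i j := by
  rw [theta_eq_mul_diagonal_columnSign, mul_diagonal, columnSign]
  split_ifs with hneg
  · by_cases h0 : X i j = 0
    · simp [h0]
    · nlinarith [hneg i h0]
  · push Not at hneg
    obtain ⟨i', hi'0, hi'⟩ := hneg
    have hcj : 0 < c j := pos_of_mul_pos_right (hc i' j hi'0) hi'
    by_cases h0 : X i j = 0
    · simp [h0]
    · simpa using (pos_of_mul_pos_left (hc i j h0) hcj.le).le

theorem apply_theta_of_flip_invariant {α : Type*} (f : Matrix (Fin n) (Fin q) ℝ → α)
    (hf : ∀ (X : Matrix (Fin n) (Fin q) ℝ) (i : Fin q),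
      f (X * diagonal (fun j => if j = i then (-1 : ℝ) else 1)) = f X)
    (X : Matrix (Fin n) (Fin q) ℝ) : f (theta X) = f X :=
  apply_mul_diagonal_eq_of_flip_invariant f hf (columnSign_eq_one_or_neg_one X) X

theorem existsUnique_ne_zero_of_mem_Bv {v : Fin n → ℝ} (hv : ∀ i, 0 < v i)
    {X : Matrix (Fin n) (Fin q) ℝ} (hX : X ∈ Bv n q v) (i : Fin n) : ∃! j, X i j ≠ 0 := by
  obtain ⟨-, hcard, c, hc⟩ := hX
  refine (ncard_ne_zero_eq_card_iff fun i => ?_).mp (by simpa using hcard) i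
  exact exists_ne_zero_of_mulVec_eq hc (hv i).ne'

theorem theta_mem_Av {v : Fin n → ℝ} (hv : ∀ i, 0 < v i) {X : Matrix (Fin n) (Fin q) ℝ}
    (hX : X ∈ Bv n q v) : theta X ∈ Av n q v := by
  have huniq := existsUnique_ne_zero_of_mem_Bv hv hX
  obtain ⟨horth, -, c, hc⟩ := hX
  have hcoherent : ∀ i j, X i j ≠ 0 → 0 < X i j * c j := fun i j hij => by
    rw [← mulVec_apply_eq_of_existsUnique (huniq i) hij, hc]
    exact hv i
  refine ⟨?_, theta_nonneg_of_sign_coherent hcoherent, columnSign X * c, ?_⟩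
  · exact transpose_mul_self_mul_diagonal horth (columnSign_mul_self X)
  · rw [theta_eq_mul_diagonal_columnSign, mul_diagonal_mulVec_mul X (columnSign_mul_self X), hc]

theorem Av_subset_Bv {v : Fin n → ℝ} (hv : ∀ i, 0 < v i) : Av n q v ⊆ Bv n q v := by
  rintro X ⟨horth, hnonneg, c, hc⟩
  have hrow : ∀ i, ∃ j, X i j ≠ 0 := fun i => exists_ne_zero_of_mulVec_eq hc (hv i).ne'
  refine ⟨horth, ?_, c, hc⟩
  simpa using (ncard_ne_zero_eq_card_iff hrow).mpr fun i =>
    (hrow i).elim fun j hj =>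
      ⟨j, hj, fun j' hj' => eq_of_ne_zero_of_nonneg_of_orthogonal horth hnonneg hj' hj⟩

end Theta

theorem stmt_1_general (n q : ℕ)
    (v : Fin n → ℝ) (hv : ∀ i, 0 < v i)
    (f : Matrix (Fin n) (Fin q) ℝ → ℝ)
    (hf : ∀ (X : Matrix (Fin n) (Fin q) ℝ) (i : Fin q),
      f (X * Matrix.diagonal (fun j => if j = i then (-1 : ℝ) else 1)) = f X)
    (Xs : Matrix (Fin n) (Fin q) ℝ) (hXs : Xs ∈ Bv n q v) :
    (∀ Y ∈ Bv n q v, f Xs ≤ f Y) ↔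
      (theta Xs ∈ Av n q v ∧ ∀ Z ∈ Av n q v, f (theta Xs) ≤ f Z) := by
  have hfθ := apply_theta_of_flip_invariant f hf
  refine ⟨fun hmin => ⟨theta_mem_Av hv hXs, fun Z hZ => ?_⟩, fun ⟨_, hmin⟩ Y hY => ?_⟩
  · rw [hfθ]
    exact hmin Z (Av_subset_Bv hv hZ)
  · rw [← hfθ Xs, ← hfθ Y]
    exact hmin (theta Y) (theta_mem_Av hv hY)

/-- If `f (X D_i) = f X` for all `X` and all `i` (where `D_i` is the diagonal
matrix with `-1` at position `i` and `1` elsewhere), then `X_* ∈ B_v` is a global minimizer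
of `f` over `B_v` iff `ϑ(X_*) ∈ A_v` and `ϑ(X_*)` is a global minimizer of `f` over `A_v`. -/
theorem stmt_1 (n q : ℕ) (hq : 1 ≤ q) (hnq : q ≤ n)
    (v : Fin n → ℝ) (hv : ∀ i, 0 < v i)
    (f : Matrix (Fin n) (Fin q) ℝ → ℝ)
    (hf : ∀ (X : Matrix (Fin n) (Fin q) ℝ) (i : Fin q),
      f (X * Matrix.diagonal (fun j => if j = i then (-1 : ℝ) else 1)) = f X)
    (Xs : Matrix (Fin n) (Fin q) ℝ) (hXs : Xs ∈ Bv n q v) :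
    (∀ Y ∈ Bv n q v, f Xs ≤ f Y) ↔
      (theta Xs ∈ Av n q v ∧ ∀ Z ∈ Av n q v, f (theta Xs) ≤ f Z) :=
  stmt_1_general n q v hv f hf Xs hXs
end

section
/- Let n ≥ q ≥ 1 be integers and let v ∈ ℝⁿ have all entries positive. For every Y ∈ B_v: (i) every row of Y has exactly one nonzero entry (in particular, distinct columns of Y have disjoint supports); and (ii) for each column index j, letting S_j = {i : Y_{ij} ≠ 0}, there exists s_j ∈ {1, −1} such that Y_{ij} = s_j · v_i / √(∑_{i′ ∈ S_j} v_{i′}²) for every i ∈ S_j. -/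
open Matrix
open scoped Classical

/-- For every `Y ∈ B_v`: (i) every row of `Y` has exactly one nonzero entry; and
(ii) for each column `j` there is a sign `s ∈ {1, -1}` such that every nonzero entry of the
`j`-th column satisfies `Y i j = s * v i / √(∑_{i' ∈ S_j} v i' ^ 2)`, where
`S_j = {i : Y i j ≠ 0}`. -/
theorem stmt_2 (n q : ℕ) (hq : 1 ≤ q) (hnq : q ≤ n)
    (v : Fin n → ℝ) (hv : ∀ i, 0 < v i)
    (Y : Matrix (Fin n) (Fin q) ℝ)
    (hY : Y ∈ ({Z : Matrix (Fin n) (Fin q) ℝ | Zᵀ * Z = 1 ∧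
      {p : Fin n × Fin q | Z p.1 p.2 ≠ 0}.ncard = n ∧
      ∃ c : Fin q → ℝ, Z *ᵥ c = v} : Set (Matrix (Fin n) (Fin q) ℝ))) :
    (∀ i : Fin n, ∃! j : Fin q, Y i j ≠ 0) ∧
    (∀ j : Fin q, ∃ s : ℝ, (s = 1 ∨ s = -1) ∧ ∀ i : Fin n, Y i j ≠ 0 →
      Y i j = s * v i /
        Real.sqrt (∑ i' ∈ Finset.univ.filter (fun i' : Fin n => Y i' j ≠ 0), v i' ^ 2)) := by
  obtain ⟨horth, hcard, c, hc⟩ := hY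
  set f : Fin n → Finset (Fin q) := fun i => Finset.univ.filter (fun j => Y i j ≠ 0) with hf
  have hrow : ∀ i, (f i).Nonempty := by
    intro i
    by_contra h
    rw [Finset.not_nonempty_iff_eq_empty, Finset.filter_eq_empty_iff] at h
    have hzero : (Y *ᵥ c) i = 0 := by
      simp only [Matrix.mulVec, dotProduct]
      apply Finset.sum_eq_zero
      intro j hj
      have := h hj
      simp only [ne_eq, not_not] at this
      rw [this]; ring
    have := hv i
    rw [← hc] at this
    linarith
  have hT : ({p : Fin n × Fin q | Y p.1 p.2 ≠ 0}).ncard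
      = (Finset.univ.filter (fun p : Fin n × Fin q => Y p.1 p.2 ≠ 0)).card := by
    rw [Set.ncard_eq_toFinset_card']
    congr 1
    ext p
    simp
  have hsum : (Finset.univ.filter (fun p : Fin n × Fin q => Y p.1 p.2 ≠ 0)).card
      = ∑ i, (f i).card := by
    rw [Finset.card_eq_sum_card_fiberwise (f := Prod.fst) (t := Finset.univ) (fun _ _ => Finset.mem_univ _)]
    apply Finset.sum_congr rfl
    intro i _
    apply Finset.card_bij (fun p _ => p.2)
    · intro p hp
      simp only [hf, Finset.mem_filter, Finset.mem_univ, true_and] at hp ⊢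
      rw [← hp.2]; exact hp.1
    · intro a ha b hb hab
      simp only [Finset.mem_filter, Finset.mem_univ, true_and] at ha hb
      exact Prod.ext (ha.2.trans hb.2.symm) hab
    · intro j hj
      simp only [hf, Finset.mem_filter, Finset.mem_univ, true_and] at hj
      exact ⟨(i, j), by simp [hj], rfl⟩
  have htot : ∑ i, (f i).card = n := by
    rw [← hsum, ← hT, hcard]
  have hone : ∀ i, (f i).card = 1 := by
    intro i
    by_contra h
    have h1 : 1 ≤ (f i).card := Finset.Nonempty.card_pos (hrow i)
    have h2 : 2 ≤ (f i).card := by omega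
    have hgood : ∀ k ∈ Finset.univ.erase i, 1 ≤ (f k).card :=
      fun k _ => Finset.Nonempty.card_pos (hrow k)
    have : n + 1 ≤ ∑ k, (f k).card := by
      have hge : (n - 1) + 2 ≤ (∑ k ∈ Finset.univ.erase i, (f k).card) + (f i).card := by
        have : (n - 1) ≤ ∑ k ∈ Finset.univ.erase i, (f k).card := by
          calc n - 1 = ∑ _k ∈ Finset.univ.erase i, 1 := by
                rw [Finset.sum_const, Finset.card_erase_of_mem (Finset.mem_univ i)]
                simp
            _ ≤ _ := Finset.sum_le_sum hgood
        omega
      rw [Finset.sum_erase_add _ _ (Finset.mem_univ i)] at hge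
      omega
    omega
  have hunique : ∀ i : Fin n, ∃! j : Fin q, Y i j ≠ 0 := by
    intro i
    obtain ⟨a, ha⟩ := Finset.card_eq_one.mp (hone i)
    refine ⟨a, ?_, ?_⟩
    · have : a ∈ f i := ha ▸ Finset.mem_singleton_self a
      simpa [hf] using this
    · intro j hj
      have : j ∈ f i := by simp [hf, hj]
      rw [ha] at this
      simpa using this
  refine ⟨hunique, ?_⟩
  intro j
  have hdiag : ∑ i, Y i j ^ 2 = 1 := by
    have := congrFun (congrFun horth j) j
    simpa [Matrix.mul_apply, Matrix.transpose_apply, Matrix.one_apply, pow_two] using this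
  have hvi : ∀ i, Y i j ≠ 0 → v i = Y i j * c j := by
    intro i hij
    have hci := congrFun hc i
    rw [← hci]
    simp only [Matrix.mulVec, dotProduct]
    rw [Finset.sum_eq_single j]
    · intro k _ hkj
      by_contra h
      have hk : Y i k ≠ 0 := fun h0 => h (by rw [h0]; ring)
      obtain ⟨a, -, hu⟩ := hunique i
      exact hkj ((hu k hk).trans (hu j hij).symm)
    · intro h; exact absurd (Finset.mem_univ j) h
  have hex : ∃ i₀, Y i₀ j ≠ 0 := by
    by_contra h
    push_neg at h
    rw [Finset.sum_eq_zero (fun i _ => by rw [h i]; ring)] at hdiag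
    norm_num at hdiag
  obtain ⟨i₀, hi₀⟩ := hex
  have hcj : c j ≠ 0 := by
    intro h0
    have := hvi i₀ hi₀
    rw [h0, mul_zero] at this
    exact absurd this (ne_of_gt (hv i₀))
  have hsq : ∑ i' ∈ Finset.univ.filter (fun i' : Fin n => Y i' j ≠ 0), v i' ^ 2 = c j ^ 2 := by
    have h1 : ∑ i' ∈ Finset.univ.filter (fun i' : Fin n => Y i' j ≠ 0), v i' ^ 2
        = ∑ i' ∈ Finset.univ.filter (fun i' : Fin n => Y i' j ≠ 0), (Y i' j ^ 2) * c j ^ 2 := by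
      apply Finset.sum_congr rfl
      intro i hi
      rw [Finset.mem_filter] at hi
      rw [hvi i hi.2]; ring
    rw [h1, ← Finset.sum_mul]
    have h2 : ∑ i' ∈ Finset.univ.filter (fun i' : Fin n => Y i' j ≠ 0), Y i' j ^ 2
        = ∑ i', Y i' j ^ 2 := by
      apply Finset.sum_filter_of_ne
      intro x _ hx
      intro h0
      exact hx (by rw [h0]; ring)
    rw [h2, hdiag, one_mul]
  refine ⟨if 0 < c j then 1 else -1, by split <;> simp, ?_⟩
  intro i hij
  rw [hsq, Real.sqrt_sq_eq_abs]
  have hYij : Y i j = v i / c j := by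
    field_simp
    exact (hvi i hij).symm
  rcases lt_or_gt_of_ne hcj with hneg | hpos
  · rw [if_neg (not_lt.mpr hneg.le), abs_of_neg hneg, hYij]
    field_simp
  · rw [if_pos hpos, abs_of_pos hpos, hYij]
    field_simp
end

section
/- Let n ≥ q ≥ 1 be integers, let v ∈ ℝⁿ have all entries positive, let X ∈ F_v, and let X⊥ be an n×(n−q) real matrix such that (X X⊥) is orthogonal. Then T_X is a linear subspace of ℝ^{n×q} of dimension nq − q(q+1)/2 − n + q. -/
/-!
`T_X` is the image of `Skew(q) × {K | K (Xᵀv) = 0}` under `(Ω, K) ↦ XΩ + X⊥K`, which is injective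
because `(X X⊥)` has the left inverse `(X X⊥)ᵀ`. Skew-symmetric `q × q` matrices are determined by
their `q(q-1)/2` entries above the diagonal. Since `v = Xc` and `XᵀX = 1`, we have `Xᵀv = c ≠ 0`,
so `K ↦ K (Xᵀv)` maps onto `ℝ^{n-q}` and its kernel has dimension `(n-q)(q-1)`. Finally
`q(q-1)/2 + (n-q)(q-1) = nq - q(q+1)/2 - n + q`.
-/

open Matrix

namespace Matrix

section SkewSymmetric

variable (ι R : Type*) [CommRing R]

def skewSymmetricSubmodule : Submodule R (Matrix ι ι R) where
  carrier := {A | Aᵀ = -A}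
  add_mem' {A B} hA hB := by simp_all [add_comm]
  zero_mem' := by simp
  smul_mem' c A hA := by simp_all

variable {ι R}

@[simp]
lemma mem_skewSymmetricSubmodule {A : Matrix ι ι R} :
    A ∈ skewSymmetricSubmodule ι R ↔ Aᵀ = -A :=
  Iff.rfl

variable [LinearOrder ι]

variable (ι R) in
def upperEntries : Matrix ι ι R →ₗ[R] ({p : ι × ι // p.1 < p.2} → R) where
  toFun A p := A p.1.1 p.1.2
  map_add' _ _ := rfl
  map_smul' _ _ := rfl

lemma eq_zero_of_transpose_eq_neg_of_upperEntries_eq_zero [NeZero (2 : R)] [NoZeroDivisors R]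
    {A : Matrix ι ι R} (hA : Aᵀ = -A) (hup : upperEntries ι R A = 0) : A = 0 := by
  have hskew (i j : ι) : A j i = -A i j := congrFun (congrFun hA i) j
  have hup (i j : ι) (h : i < j) : A i j = 0 := congrFun hup ⟨(i, j), h⟩
  ext i j
  rcases lt_trichotomy i j with h | rfl | h
  · exact hup i j h
  · have : 2 * A i i = 0 := by rw [two_mul]; nth_rewrite 1 [hskew]; exact neg_add_cancel _
    exact (mul_eq_zero.mp this).resolve_left two_ne_zero
  · rw [hskew, hup j i h, neg_zero, zero_apply]

lemma exists_transpose_eq_neg_upperEntries_eq (f : {p : ι × ι // p.1 < p.2} → R) :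
    ∃ A : Matrix ι ι R, Aᵀ = -A ∧ upperEntries ι R A = f := by
  let U : Matrix ι ι R := fun i j => if h : i < j then f ⟨(i, j), h⟩ else 0
  refine ⟨U - Uᵀ, by rw [transpose_sub, transpose_transpose, neg_sub], ?_⟩
  funext ⟨⟨i, j⟩, (h : i < j)⟩
  change (U - Uᵀ) i j = _
  rw [sub_apply, transpose_apply]
  simp only [U, dif_pos h, dif_neg h.not_gt, sub_zero]

theorem bijective_upperEntries_domRestrict [NeZero (2 : R)] [NoZeroDivisors R] :
    Function.Bijective ((upperEntries ι R).domRestrict (skewSymmetricSubmodule ι R)) := by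
  refine ⟨?_, fun f => ?_⟩
  · rw [← LinearMap.ker_eq_bot, LinearMap.ker_eq_bot']
    rintro ⟨A, hA⟩ hup
    exact Subtype.ext (eq_zero_of_transpose_eq_neg_of_upperEntries_eq_zero hA hup)
  · obtain ⟨A, hA, rfl⟩ := exists_transpose_eq_neg_upperEntries_eq f
    exact ⟨⟨A, hA⟩, rfl⟩

theorem finrank_skewSymmetricSubmodule [Fintype ι] {K : Type*} [Field K] [NeZero (2 : K)] :
    Module.finrank K (skewSymmetricSubmodule ι K) = (Fintype.card ι).choose 2 := by
  rw [(LinearEquiv.ofBijective _ bijective_upperEntries_domRestrict).finrank_eq,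
    Module.finrank_fintype_fun_eq_card, Fintype.card_subtype, Fintype.card_product_filter_lt]

end SkewSymmetric

section MulVecKernel

variable {m n K : Type*} [Fintype n] [Field K]

theorem surjective_mulVec_flip_of_ne_zero {w : n → K} (hw : w ≠ 0) :
    Function.Surjective ((mulVecBilin K K).flip w : Matrix m n K →ₗ[K] m → K) := by
  classical
  obtain ⟨j, hj⟩ := Function.ne_iff.mp hw
  intro y
  refine ⟨vecMulVec y (Pi.single j (w j)⁻¹), ?_⟩
  rw [LinearMap.flip_apply, mulVecBilin_apply, vecMulVec_mulVec, single_dotProduct,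
    inv_mul_cancel₀ hj, MulOpposite.op_one, one_smul]

theorem finrank_ker_mulVec_flip_add_card [Fintype m] {w : n → K} (hw : w ≠ 0) :
    Module.finrank K (LinearMap.ker ((mulVecBilin K K).flip w : Matrix m n K →ₗ[K] m → K)) +
      Fintype.card m = Fintype.card m * Fintype.card n := by
  have := LinearMap.finrank_range_add_finrank_ker
    ((mulVecBilin K K).flip w : Matrix m n K →ₗ[K] m → K)
  rw [LinearMap.range_eq_top.mpr (surjective_mulVec_flip_of_ne_zero hw), finrank_top,
    Module.finrank_fintype_fun_eq_card, Module.finrank_matrix, Module.finrank_self,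
    mul_one] at this
  omega

end MulVecKernel

section FromCols

variable {m n₁ n₂ p R : Type*} [Fintype m] [Fintype n₁] [Fintype n₂] [DecidableEq n₁]
  [DecidableEq n₂] [CommRing R] {X : Matrix m n₁ R} {Y : Matrix m n₂ R}

theorem eq_zero_of_mul_add_mul_eq_zero {L : Matrix (n₁ ⊕ n₂) m R} (hL : L * fromCols X Y = 1)
    {A : Matrix n₁ p R} {B : Matrix n₂ p R} (h : X * A + Y * B = 0) : A = 0 ∧ B = 0 := by
  have : fromRows A B = fromRows 0 0 := by
    rw [fromRows_zero, ← Matrix.one_mul (fromRows A B), ← hL, Matrix.mul_assoc,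
      fromCols_mul_fromRows, h, Matrix.mul_zero]
  exact fromRows_inj this

variable (X Y)

def mulAddMulLinearMap (S : Submodule R (Matrix n₁ p R)) (T : Submodule R (Matrix n₂ p R)) :
    S × T →ₗ[R] Matrix m p R :=
  (mulLeftLinearMap p R X ∘ₗ S.subtype).coprod (mulLeftLinearMap p R Y ∘ₗ T.subtype)

variable {X Y}

theorem injective_mulAddMulLinearMap {L : Matrix (n₁ ⊕ n₂) m R} (hL : L * fromCols X Y = 1)
    (S : Submodule R (Matrix n₁ p R)) (T : Submodule R (Matrix n₂ p R)) :
    Function.Injective (mulAddMulLinearMap X Y S T) := by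
  rw [← LinearMap.ker_eq_bot, LinearMap.ker_eq_bot']
  rintro ⟨⟨A, hA⟩, ⟨B, hB⟩⟩ h
  obtain ⟨rfl, rfl⟩ := eq_zero_of_mul_add_mul_eq_zero hL h
  rfl

end FromCols

end Matrix

theorem Int.natCast_choose_two_mul_two (q : ℕ) : (q.choose 2 : ℤ) * 2 = q * (q - 1) := by
  rcases q with _ | q
  · simp
  · have := Nat.div_mul_cancel (Nat.even_mul_pred_self (q + 1)).two_dvd
    rw [← Nat.choose_two_right, Nat.add_sub_cancel] at this
    push_cast
    rw [add_sub_cancel_right]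
    exact_mod_cast this

/-- For `X ∈ F_v` and `X⊥` with `(X X⊥)` orthogonal, the set
`T_X = {XΩ + X⊥K : Ωᵀ = −Ω, K (Xᵀv) = 0}` is a linear subspace of `ℝ^{n×q}` of dimension
`nq − q(q+1)/2 − n + q`. -/
theorem stmt_5 (n q : ℕ) (hq : 1 ≤ q) (hnq : q ≤ n)
    (v : Fin n → ℝ) (hv : ∀ i, 0 < v i)
    (X : Matrix (Fin n) (Fin q) ℝ)
    (hX : Xᵀ * X = 1 ∧ ∃ c : Fin q → ℝ, X *ᵥ c = v)
    (Xp : Matrix (Fin n) (Fin (n - q)) ℝ)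
    (hO : (fromCols X Xp)ᵀ * fromCols X Xp = 1) :
    ∃ T : Submodule ℝ (Matrix (Fin n) (Fin q) ℝ),
      (T : Set (Matrix (Fin n) (Fin q) ℝ)) =
        {V | ∃ (Ω : Matrix (Fin q) (Fin q) ℝ) (K : Matrix (Fin (n - q)) (Fin q) ℝ),
          Ωᵀ = -Ω ∧ K *ᵥ (Xᵀ *ᵥ v) = 0 ∧ V = X * Ω + Xp * K} ∧
      (Module.finrank ℝ T : ℤ) =
        (n : ℤ) * q - ((q : ℤ) * (q + 1)) / 2 - n + q := by
  obtain ⟨hXX, c, rfl⟩ := hX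
  have hw : Xᵀ *ᵥ (X *ᵥ c) ≠ 0 := by
    rw [mulVec_mulVec, hXX, one_mulVec]
    rintro rfl
    exact (hv ⟨0, by omega⟩).ne' (by simp)
  let f := mulAddMulLinearMap X Xp (skewSymmetricSubmodule (Fin q) ℝ)
    (LinearMap.ker ((mulVecBilin ℝ ℝ).flip (Xᵀ *ᵥ (X *ᵥ c))))
  refine ⟨LinearMap.range f, ?_, ?_⟩
  · ext V
    simp [f, mulAddMulLinearMap, eq_comm]
  · rw [LinearMap.finrank_range_of_inj (injective_mulAddMulLinearMap hO _ _),
      Module.finrank_prod, finrank_skewSymmetricSubmodule]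
    have hker := finrank_ker_mulVec_flip_add_card (m := Fin (n - q)) hw
    have hchoose := Int.natCast_choose_two_mul_two q
    have htri : (q : ℤ) * (q + 1) / 2 = q.choose 2 + q :=
      Int.ediv_eq_of_eq_mul_left two_ne_zero (by linear_combination -hchoose)
    simp only [Fintype.card_fin] at hker ⊢
    push_cast [← Nat.cast_inj (R := ℤ), Nat.cast_sub hnq] at hker ⊢
    rw [htri]
    linear_combination hker + hchoose
end

section
/- Let n ≥ q ≥ 1 be integers, let v ∈ ℝⁿ have all entries positive, let X ∈ F_v, and let X⊥ be an n×(n−q) real matrix such that (X X⊥) is orthogonal. Then for every V ∈ T_X and every U ∈ N_X one has trace(Uᵀ V) = 0. -/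
/-!
Since `(X X⊥)` has orthonormal columns, writing `U = X S + X⊥ L` and `V = X Ω + X⊥ K` gives
`Uᵀ V = Sᵀ Ω + Lᵀ K`. The first trace vanishes because `S` is symmetric and `Ω` skew-symmetric;
for `L = u (Xᵀ v)ᵀ` the second trace is `uᵀ K (Xᵀ v)`, which vanishes by the constraint on `K`.
-/

open Matrix

namespace Matrix

variable {m n k l p R : Type*} [Fintype n] [Fintype k]

theorem trace_mul_eq_zero_of_transpose_eq_self_of_transpose_eq_neg [CommRing R]
    [IsAddTorsionFree R] {S Ω : Matrix n n R} (hS : Sᵀ = S) (hΩ : Ωᵀ = -Ω) :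
    trace (S * Ω) = 0 :=
  self_eq_neg.mp <| by
    conv_lhs => rw [← trace_transpose, transpose_mul, hΩ, hS, Matrix.neg_mul, trace_neg,
      trace_mul_comm]

theorem trace_transpose_vecMulVec_mul [CommSemiring R] (u : k → R) (b : n → R)
    (K : Matrix k n R) : trace ((vecMulVec u b)ᵀ * K) = u ⬝ᵥ K *ᵥ b := by
  rw [transpose_vecMulVec, vecMulVec_mul, trace_vecMulVec, dotProduct_comm,
    dotProduct_mulVec]

theorem transpose_mul_of_fromCols_orthonormal [Fintype m] [DecidableEq n] [DecidableEq k]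
    [CommSemiring R] {X : Matrix m n R} {Y : Matrix m k R}
    (hXY : (fromCols X Y)ᵀ * fromCols X Y = 1) (A : Matrix n l R) (B : Matrix k l R)
    (C : Matrix n p R) (D : Matrix k p R) :
    (X * A + Y * B)ᵀ * (X * C + Y * D) = Aᵀ * C + Bᵀ * D := by
  rw [← fromCols_mul_fromRows, ← fromCols_mul_fromRows, transpose_mul, Matrix.mul_assoc,
    ← Matrix.mul_assoc (fromCols X Y)ᵀ, hXY, Matrix.one_mul, transpose_fromRows,
    fromCols_mul_fromRows]

end Matrix

theorem stmt_6_general (n q : ℕ)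
    (v : Fin n → ℝ)
    (X : Matrix (Fin n) (Fin q) ℝ)
    (Xp : Matrix (Fin n) (Fin (n - q)) ℝ)
    (hO : (fromCols X Xp)ᵀ * fromCols X Xp = 1)
    (V U : Matrix (Fin n) (Fin q) ℝ)
    (hV : ∃ (Ω : Matrix (Fin q) (Fin q) ℝ) (K : Matrix (Fin (n - q)) (Fin q) ℝ),
      Ωᵀ = -Ω ∧ K *ᵥ (Xᵀ *ᵥ v) = 0 ∧ V = X * Ω + Xp * K)
    (hU : ∃ (S : Matrix (Fin q) (Fin q) ℝ) (u : Fin (n - q) → ℝ),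
      Sᵀ = S ∧ U = X * S + vecMulVec (Xp *ᵥ u) (v ᵥ* X)) :
    Matrix.trace (Uᵀ * V) = 0 := by
  obtain ⟨Ω, K, hΩ, hK, rfl⟩ := hV
  obtain ⟨S, u, hS, rfl⟩ := hU
  rw [← mul_vecMulVec, transpose_mul_of_fromCols_orthonormal hO, trace_add, hS,
    trace_mul_eq_zero_of_transpose_eq_self_of_transpose_eq_neg hS hΩ,
    trace_transpose_vecMulVec_mul, ← mulVec_transpose, hK, dotProduct_zero, add_zero]

/-- For `X ∈ F_v` and `X⊥` with `(X X⊥)` orthogonal, every `V ∈ T_X` and every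
`U ∈ N_X` satisfy `trace(Uᵀ V) = 0`, where
`T_X = {XΩ + X⊥K : Ωᵀ = −Ω, K (Xᵀv) = 0}` and `N_X = {XS + X⊥ u vᵀ X : Sᵀ = S, u ∈ ℝ^{n−q}}`. -/
theorem stmt_6 (n q : ℕ) (hq : 1 ≤ q) (hnq : q ≤ n)
    (v : Fin n → ℝ) (hv : ∀ i, 0 < v i)
    (X : Matrix (Fin n) (Fin q) ℝ)
    (hX : Xᵀ * X = 1 ∧ ∃ c : Fin q → ℝ, X *ᵥ c = v)
    (Xp : Matrix (Fin n) (Fin (n - q)) ℝ)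
    (hO : (fromCols X Xp)ᵀ * fromCols X Xp = 1)
    (V U : Matrix (Fin n) (Fin q) ℝ)
    (hV : ∃ (Ω : Matrix (Fin q) (Fin q) ℝ) (K : Matrix (Fin (n - q)) (Fin q) ℝ),
      Ωᵀ = -Ω ∧ K *ᵥ (Xᵀ *ᵥ v) = 0 ∧ V = X * Ω + Xp * K)
    (hU : ∃ (S : Matrix (Fin q) (Fin q) ℝ) (u : Fin (n - q) → ℝ),
      Sᵀ = S ∧ U = X * S + vecMulVec (Xp *ᵥ u) (v ᵥ* X)) :
    Matrix.trace (Uᵀ * V) = 0 :=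
  stmt_6_general n q v X Xp hO V U hV hU
end

section
/- Let n ≥ q ≥ 1 be integers, let v ∈ ℝⁿ have all entries positive, let X ∈ F_v, let X⊥ be an n×(n−q) real matrix such that (X X⊥) is orthogonal, and set α̂ = Xᵀv/‖Xᵀv‖₂ (which is well defined since Xᵀv ≠ 0). For Z ∈ ℝ^{n×q} define P_N(Z) = X·(XᵀZ + ZᵀX)/2 + (I_n − XXᵀ) Z α̂ α̂ᵀ. Then P_N(Z) ∈ N_X, Z − P_N(Z) = X·(XᵀZ − ZᵀX)/2 + (I_n − XXᵀ) Z (I_q − α̂ α̂ᵀ) ∈ T_X, and consequently P_N(Z) is the orthogonal projection of Z onto the subspace N_X with respect to the Frobenius inner product. -/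
/-!
Write `M = XᵀZ`, `a = Xᵀv` and `A = α̂α̂ᵀ`. Completeness of the orthonormal basis `(X X⊥)` gives
`I - XXᵀ = X⊥X⊥ᵀ`, so `P_N(Z) = X·sym(M) + X⊥(X⊥ᵀZα̂)α̂ᵀ` and `Z - P_N(Z) = X·skew(M) + X⊥K` with
`K = X⊥ᵀZ(I - A)`. Since `α̂` is `a` normalized, `Aa = a`, hence `Ka = 0`; as `vᵀX = aᵀ`, the
normal term `X⊥ u vᵀX` is `X⊥ u aᵀ`. In the Frobenius pairing of `XΩ + X⊥K` with `XS + X⊥uaᵀ`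
the cross terms vanish by orthonormality, `tr(ΩᵀS) = 0` for skew `Ω` and symmetric `S`, and
`tr(Kᵀuaᵀ) = uᵀ(Ka) = 0`.
-/

open Matrix

namespace Matrix

variable {R m k l : Type*}

theorem fromCols_transpose_mul_self_eq_one_iff [CommRing R] [Fintype m]
    [DecidableEq k] [DecidableEq l] (X : Matrix m k R) (Y : Matrix m l R) :
    (fromCols X Y)ᵀ * fromCols X Y = 1 ↔
      Xᵀ * X = 1 ∧ Xᵀ * Y = 0 ∧ Yᵀ * X = 0 ∧ Yᵀ * Y = 1 := by
  rw [transpose_fromCols, fromRows_mul_fromCols, ← fromBlocks_one, fromBlocks_inj]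

theorem mul_transpose_add_mul_transpose_eq_one [CommRing R] [Fintype m] [Fintype k] [Fintype l]
    [DecidableEq m] [DecidableEq k] [DecidableEq l] (e : m ≃ k ⊕ l)
    {X : Matrix m k R} {Y : Matrix m l R} (h : (fromCols X Y)ᵀ * fromCols X Y = 1) :
    X * Xᵀ + Y * Yᵀ = 1 := by
  rwa [transpose_fromCols, ← fromCols_mul_fromRows_eq_one_comm e, fromCols_mul_fromRows] at h

theorem trace_transpose_mul_eq_zero_of_skew_of_symm [CommRing R] [NoZeroDivisors R] [CharZero R]
    [Fintype k] {Ω S : Matrix k k R} (hΩ : Ωᵀ = -Ω) (hS : Sᵀ = S) :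
    trace (Ωᵀ * S) = 0 :=
  self_eq_neg.mp <| calc
    trace (Ωᵀ * S) = trace (Sᵀ * Ω) := by
      rw [← trace_transpose, transpose_mul, transpose_transpose]
    _ = trace (Ω * S) := by rw [hS, trace_mul_comm]
    _ = -trace (Ωᵀ * S) := by rw [hΩ, neg_mul, trace_neg, neg_neg]

theorem transpose_mul_mul_add_vecMulVec_of_orthonormal [CommRing R] [Fintype m] [Fintype k]
    [Fintype l] [DecidableEq k] [DecidableEq l] {X : Matrix m k R} {Y : Matrix m l R}
    (hXX : Xᵀ * X = 1) (hXY : Xᵀ * Y = 0) (hYY : Yᵀ * Y = 1)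
    (Ω S : Matrix k k R) (K : Matrix l k R) (u : l → R) (a : k → R) :
    (X * Ω + Y * K)ᵀ * (X * S + vecMulVec (Y *ᵥ u) a) = Ωᵀ * S + vecMulVec (Kᵀ *ᵥ u) a := by
  have hYX : Yᵀ * X = 0 := by simpa using congrArg transpose hXY
  simp only [transpose_add, transpose_mul, Matrix.add_mul, Matrix.mul_add, Matrix.mul_assoc,
    mul_vecMulVec, mulVec_mulVec, ← Matrix.mul_assoc Xᵀ, ← Matrix.mul_assoc Yᵀ,
    hXX, hXY, hYX, hYY]
  simp

theorem trace_transpose_mul_eq_zero_of_orthonormal [CommRing R] [NoZeroDivisors R] [CharZero R]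
    [Fintype m] [Fintype k] [Fintype l] [DecidableEq k] [DecidableEq l]
    {X : Matrix m k R} {Y : Matrix m l R} (hXX : Xᵀ * X = 1) (hXY : Xᵀ * Y = 0)
    (hYY : Yᵀ * Y = 1) {Ω S : Matrix k k R} {K : Matrix l k R} {a : k → R}
    (hΩ : Ωᵀ = -Ω) (hS : Sᵀ = S) (hK : K *ᵥ a = 0) (u : l → R) :
    trace ((X * Ω + Y * K)ᵀ * (X * S + vecMulVec (Y *ᵥ u) a)) = 0 := by
  rw [transpose_mul_mul_add_vecMulVec_of_orthonormal hXX hXY hYY, trace_add,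
    trace_transpose_mul_eq_zero_of_skew_of_symm hΩ hS, trace_vecMulVec, mulVec_transpose,
    ← dotProduct_mulVec, hK, dotProduct_zero, add_zero]

theorem vecMulVec_normalize_mulVec_self [Fintype k] (a : k → ℝ) :
    vecMulVec (fun j => a j / √(∑ i, a i ^ 2)) (fun j => a j / √(∑ i, a i ^ 2)) *ᵥ a = a := by
  ext j
  by_cases hs : ∑ i, a i ^ 2 = 0
  · have ha : a = 0 := funext fun i => pow_eq_zero_iff two_ne_zero |>.1 <|
      (Finset.sum_eq_zero_iff_of_nonneg fun i _ => sq_nonneg (a i)).1 hs i (Finset.mem_univ i)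
    simp [ha]
  · calc (vecMulVec _ _ *ᵥ a) j = a j * (∑ i, a i ^ 2) / √(∑ i, a i ^ 2) ^ 2 := by
          simp only [mulVec, dotProduct, vecMulVec_apply, Finset.mul_sum, Finset.sum_div]
          exact Finset.sum_congr rfl fun i _ => by ring
      _ = a j := by rw [Real.sq_sqrt (by positivity), mul_div_cancel_right₀ _ hs]

end Matrix

theorem stmt_8_general (n q : ℕ) (hnq : q ≤ n)
    (v : Fin n → ℝ)
    (X : Matrix (Fin n) (Fin q) ℝ)
    (Xp : Matrix (Fin n) (Fin (n - q)) ℝ)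
    (hO : (fromCols X Xp)ᵀ * fromCols X Xp = 1)
    (ah : Fin q → ℝ)
    (hah : ah = fun j => (Xᵀ *ᵥ v) j / Real.sqrt (∑ k, ((Xᵀ *ᵥ v) k) ^ 2))
    (Z P : Matrix (Fin n) (Fin q) ℝ)
    (hP : P = (1 / 2 : ℝ) • (X * (Xᵀ * Z + Zᵀ * X)) +
      (1 - X * Xᵀ) * Z * vecMulVec ah ah) :
    (∃ (S : Matrix (Fin q) (Fin q) ℝ) (u : Fin (n - q) → ℝ),
      Sᵀ = S ∧ P = X * S + vecMulVec (Xp *ᵥ u) (v ᵥ* X)) ∧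
    Z - P = (1 / 2 : ℝ) • (X * (Xᵀ * Z - Zᵀ * X)) +
      (1 - X * Xᵀ) * Z * (1 - vecMulVec ah ah) ∧
    (∃ (Ω : Matrix (Fin q) (Fin q) ℝ) (K : Matrix (Fin (n - q)) (Fin q) ℝ),
      Ωᵀ = -Ω ∧ K *ᵥ (Xᵀ *ᵥ v) = 0 ∧ Z - P = X * Ω + Xp * K) ∧
    (∀ W : Matrix (Fin n) (Fin q) ℝ,
      (∃ (S : Matrix (Fin q) (Fin q) ℝ) (u : Fin (n - q) → ℝ),
        Sᵀ = S ∧ W = X * S + vecMulVec (Xp *ᵥ u) (v ᵥ* X)) →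
      Matrix.trace ((Z - P)ᵀ * W) = 0) := by
  obtain ⟨hXX, hXXp, -, hXpXp⟩ := (fromCols_transpose_mul_self_eq_one_iff X Xp).1 hO
  have hproj : Xp * Xpᵀ = 1 - X * Xᵀ := eq_sub_of_add_eq' <| mul_transpose_add_mul_transpose_eq_one
    ((finCongr (Nat.add_sub_cancel' hnq).symm).trans finSumFinEquiv.symm) hO
  set a := Xᵀ *ᵥ v
  have hva : v ᵥ* X = a := (mulVec_transpose X v).symm
  have hAa : vecMulVec ah ah *ᵥ a = a := hah ▸ vecMulVec_normalize_mulVec_self a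
  have hA : vecMulVec ah ah = vecMulVec ((√(∑ k, a k ^ 2))⁻¹ • ah) a := by
    ext i j; simp only [hah, vecMulVec_apply, Pi.smul_apply, smul_eq_mul]; ring
  have hZP : Z - P = (1 / 2 : ℝ) • (X * (Xᵀ * Z - Zᵀ * X)) +
      (1 - X * Xᵀ) * Z * (1 - vecMulVec ah ah) := by
    rw [hP]
    simp only [Matrix.mul_add, Matrix.mul_sub, Matrix.sub_mul, Matrix.one_mul, Matrix.mul_one,
      Matrix.mul_assoc]
    module
  set Ω := (1 / 2 : ℝ) • (Xᵀ * Z - Zᵀ * X)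
  set K := Xpᵀ * Z * (1 - vecMulVec ah ah)
  have hΩ : Ωᵀ = -Ω := by simp [Ω, transpose_mul, ← smul_neg]
  have hK : K *ᵥ a = 0 := by
    rw [← mulVec_mulVec, sub_mulVec, one_mulVec, hAa, sub_self, mulVec_zero]
  have hT : Z - P = X * Ω + Xp * K := by
    rw [hZP, Matrix.mul_smul, ← Matrix.mul_assoc, ← Matrix.mul_assoc, hproj]
  refine ⟨⟨(1 / 2 : ℝ) • (Xᵀ * Z + Zᵀ * X), (Xpᵀ * Z) *ᵥ ((√(∑ k, a k ^ 2))⁻¹ • ah), ?_, ?_⟩,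
    hZP, ⟨Ω, K, hΩ, hK, hT⟩, ?_⟩
  · simp [transpose_mul, add_comm]
  · rw [hP, hva, hA, ← hproj, Matrix.mul_smul, mul_vecMulVec, mulVec_mulVec, Matrix.mul_assoc]
  · rintro W ⟨S, u, hS, rfl⟩
    rw [hT, hva]
    exact trace_transpose_mul_eq_zero_of_orthonormal hXX hXXp hXpXp hΩ hS hK u

/-- With `α̂ = Xᵀv / ‖Xᵀv‖₂` and
`P_N(Z) = X (XᵀZ + ZᵀX)/2 + (I − XXᵀ) Z α̂ α̂ᵀ`, one has `P_N(Z) ∈ N_X`,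
`Z − P_N(Z) = X (XᵀZ − ZᵀX)/2 + (I − XXᵀ) Z (I − α̂ α̂ᵀ) ∈ T_X`, and `Z − P_N(Z)` is
Frobenius-orthogonal to `N_X`, so `P_N(Z)` is the orthogonal projection of `Z` onto `N_X`. -/
theorem stmt_8 (n q : ℕ) (hq : 1 ≤ q) (hnq : q ≤ n)
    (v : Fin n → ℝ) (hv : ∀ i, 0 < v i)
    (X : Matrix (Fin n) (Fin q) ℝ)
    (hX : Xᵀ * X = 1 ∧ ∃ c : Fin q → ℝ, X *ᵥ c = v)
    (Xp : Matrix (Fin n) (Fin (n - q)) ℝ)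
    (hO : (fromCols X Xp)ᵀ * fromCols X Xp = 1)
    (ah : Fin q → ℝ)
    (hah : ah = fun j => (Xᵀ *ᵥ v) j / Real.sqrt (∑ k, ((Xᵀ *ᵥ v) k) ^ 2))
    (Z P : Matrix (Fin n) (Fin q) ℝ)
    (hP : P = (1 / 2 : ℝ) • (X * (Xᵀ * Z + Zᵀ * X)) +
      (1 - X * Xᵀ) * Z * vecMulVec ah ah) :
    (∃ (S : Matrix (Fin q) (Fin q) ℝ) (u : Fin (n - q) → ℝ),
      Sᵀ = S ∧ P = X * S + vecMulVec (Xp *ᵥ u) (v ᵥ* X)) ∧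
    Z - P = (1 / 2 : ℝ) • (X * (Xᵀ * Z - Zᵀ * X)) +
      (1 - X * Xᵀ) * Z * (1 - vecMulVec ah ah) ∧
    (∃ (Ω : Matrix (Fin q) (Fin q) ℝ) (K : Matrix (Fin (n - q)) (Fin q) ℝ),
      Ωᵀ = -Ω ∧ K *ᵥ (Xᵀ *ᵥ v) = 0 ∧ Z - P = X * Ω + Xp * K) ∧
    (∀ W : Matrix (Fin n) (Fin q) ℝ,
      (∃ (S : Matrix (Fin q) (Fin q) ℝ) (u : Fin (n - q) → ℝ),
        Sᵀ = S ∧ W = X * S + vecMulVec (Xp *ᵥ u) (v ᵥ* X)) →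
      Matrix.trace ((Z - P)ᵀ * W) = 0) :=
  stmt_8_general n q hnq v X Xp hO ah hah Z P hP
end

section
/- Let n ≥ q ≥ 1 be integers, let v ∈ ℝⁿ have all entries positive, and let X ∈ ℝ^{n×q} satisfy XᵀX = I_q and Xᵀv ≠ 0. Set q_* = Xᵀv/‖Xᵀv‖₂ and Y_* = v q_*ᵀ/‖v‖₂ + X (I_q − q_* q_*ᵀ). Then Y_* ∈ F_v and ‖X − Y_*‖_F ≤ ‖X − Y‖_F for every Y ∈ F_v. -/
/-!
For `Y` with orthonormal columns, `‖X - Y‖_F² = 2q - 2 tr(XᵀY)`, so `Y_*` must maximise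
`tr(XᵀY)` over `F_v`. If `Yc = v` then `u = c / ‖v‖` is a unit vector with `Yu = v / ‖v‖`.
Splitting `tr(XᵀY)` along `uuᵀ` and the complementary projection `P = I - uuᵀ` gives
`tr(XᵀY) = ⟨u, Xᵀv⟩ / ‖v‖ + ⟨XP, YP⟩_F ≤ ‖Xᵀv‖ / ‖v‖ + tr P = ‖Xᵀv‖ / ‖v‖ + q - 1`
by Cauchy–Schwarz twice, and `Y_*` attains this value.
-/

open Matrix

namespace Matrix

section Projection

variable {R n : Type*} [CommRing R] {u : n → R}

lemma transpose_one_sub_vecMulVec_self [DecidableEq n] (u : n → R) :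
    (1 - vecMulVec u u)ᵀ = 1 - vecMulVec u u := by
  rw [transpose_sub, transpose_one, transpose_vecMulVec]

variable [Fintype n]

lemma isIdempotentElem_vecMulVec_self (hu : u ⬝ᵥ u = 1) : IsIdempotentElem (vecMulVec u u) := by
  rw [IsIdempotentElem, vecMulVec_mul_vecMulVec, hu, one_smul]

variable [DecidableEq n]

lemma trace_one_sub_vecMulVec_self (hu : u ⬝ᵥ u = 1) :
    trace (1 - vecMulVec u u) = (Fintype.card n : R) - 1 := by
  rw [trace_sub, trace_one, trace_vecMulVec, hu]

lemma one_sub_vecMulVec_self_mulVec (hu : u ⬝ᵥ u = 1) : (1 - vecMulVec u u) *ᵥ u = 0 := by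
  rw [sub_mulVec, one_mulVec, vecMulVec_mulVec, hu, MulOpposite.op_one, one_smul, sub_self]

end Projection

section EuclideanNorm

variable {n : Type*} [Fintype n]

lemma sum_sq_eq_dotProduct_self (v : n → ℝ) : ∑ i, v i ^ 2 = v ⬝ᵥ v := by
  simp only [dotProduct, sq]

lemma sq_sqrt_sum_sq (v : n → ℝ) : √(∑ i, v i ^ 2) ^ 2 = v ⬝ᵥ v := by
  rw [Real.sq_sqrt (by positivity), sum_sq_eq_dotProduct_self]

lemma sqrt_sum_sq_pos {v : n → ℝ} (hv : v ≠ 0) : 0 < √(∑ i, v i ^ 2) := by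
  rw [Real.sqrt_pos]
  obtain ⟨i, hi⟩ := Function.ne_iff.mp hv
  exact Finset.sum_pos' (fun j _ => sq_nonneg (v j))
    ⟨i, Finset.mem_univ i, pow_two_pos_of_ne_zero hi⟩

lemma dotProduct_le_sqrt_sum_sq {u : n → ℝ} (hu : u ⬝ᵥ u = 1) (w : n → ℝ) :
    u ⬝ᵥ w ≤ √(∑ i, w i ^ 2) := by
  have h := Real.sum_mul_le_sqrt_mul_sqrt Finset.univ u w
  rwa [sum_sq_eq_dotProduct_self u, hu, Real.sqrt_one, one_mul] at h

lemma dotProduct_div_sqrt_sum_sq (w : n → ℝ) :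
    w ⬝ᵥ (fun j => w j / √(∑ k, w k ^ 2)) = √(∑ k, w k ^ 2) := by
  simp only [dotProduct, mul_div_assoc', ← Finset.sum_div, ← sq]
  exact Real.div_sqrt

lemma smul_div_sqrt_sum_sq {w : n → ℝ} (hw : w ≠ 0) :
    √(∑ k, w k ^ 2) • (fun j => w j / √(∑ k, w k ^ 2)) = w := by
  ext j
  exact mul_div_cancel₀ _ (sqrt_sum_sq_pos hw).ne'

lemma div_sqrt_sum_sq_dotProduct_self {w : n → ℝ} (hw : w ≠ 0) :
    (fun j => w j / √(∑ k, w k ^ 2)) ⬝ᵥ (fun j => w j / √(∑ k, w k ^ 2)) = 1 := by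
  have h := dotProduct_div_sqrt_sum_sq w
  simp only [dotProduct] at h ⊢
  simp only [div_mul_eq_mul_div, ← Finset.sum_div, h, div_self (sqrt_sum_sq_pos hw).ne']

end EuclideanNorm

section Frobenius

variable {m n : Type*} [Fintype m] [Fintype n]

lemma trace_transpose_mul_comm {R : Type*} [CommSemiring R] (A B : Matrix m n R) :
    trace (Bᵀ * A) = trace (Aᵀ * B) := by
  rw [← trace_transpose, transpose_mul, transpose_transpose]

lemma two_mul_trace_transpose_mul_le (A B : Matrix m n ℝ) :
    2 * trace (Aᵀ * B) ≤ trace (Aᵀ * A) + trace (Bᵀ * B) := by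
  have h := (posSemidef_conjTranspose_mul_self (A - B)).trace_nonneg
  rw [conjTranspose_eq_transpose_of_trivial, transpose_sub, Matrix.sub_mul, Matrix.mul_sub,
    Matrix.mul_sub, trace_sub, trace_sub, trace_sub, trace_transpose_mul_comm A B] at h
  linarith

lemma trace_transpose_mul_mul_of_isIdempotentElem {R : Type*} [CommSemiring R] {P : Matrix n n R}
    (hP : IsIdempotentElem P) (hPt : Pᵀ = P) (A B : Matrix m n R) :
    trace ((A * P)ᵀ * (B * P)) = trace (Aᵀ * B * P) := by
  rw [transpose_mul, hPt, Matrix.mul_assoc, trace_mul_comm, Matrix.mul_assoc, Matrix.mul_assoc,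
    hP.eq, Matrix.mul_assoc]

variable [DecidableEq n] {X Y : Matrix m n ℝ}

lemma trace_transpose_sub_mul_sub_of_orthonormal (hX : Xᵀ * X = 1) (hY : Yᵀ * Y = 1) :
    trace ((X - Y)ᵀ * (X - Y)) = 2 * Fintype.card n - 2 * trace (Xᵀ * Y) := by
  rw [transpose_sub, Matrix.sub_mul, Matrix.mul_sub, Matrix.mul_sub, hX, hY, trace_sub, trace_sub,
    trace_sub, trace_one, trace_transpose_mul_comm X Y]
  ring

lemma trace_transpose_mul_le_dotProduct_add (hX : Xᵀ * X = 1) (hY : Yᵀ * Y = 1) {u : n → ℝ}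
    (hu : u ⬝ᵥ u = 1) :
    trace (Xᵀ * Y) ≤ (X *ᵥ u) ⬝ᵥ (Y *ᵥ u) + (Fintype.card n - 1) := by
  set P := 1 - vecMulVec u u
  have hP : IsIdempotentElem P := (isIdempotentElem_vecMulVec_self hu).one_sub
  have hPt : Pᵀ = P := transpose_one_sub_vecMulVec_self u
  have hsplit : trace (Xᵀ * Y) = trace (Xᵀ * Y * vecMulVec u u) + trace (Xᵀ * Y * P) := by
    rw [← trace_add, ← Matrix.mul_add, add_sub_cancel, Matrix.mul_one]
  have hrankOne : trace (Xᵀ * Y * vecMulVec u u) = (X *ᵥ u) ⬝ᵥ (Y *ᵥ u) := by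
    rw [mul_vecMulVec, trace_vecMulVec, ← mulVec_mulVec, mulVec_transpose, ← dotProduct_mulVec,
      dotProduct_comm]
  have hcompl : 2 * trace (Xᵀ * Y * P) ≤ 2 * (Fintype.card n - 1) := by
    have h := two_mul_trace_transpose_mul_le (X * P) (Y * P)
    simp only [trace_transpose_mul_mul_of_isIdempotentElem hP hPt, hX, hY, Matrix.one_mul,
      trace_one_sub_vecMulVec_self hu, P] at h
    linarith
  linarith

lemma trace_transpose_mul_le_of_mulVec_eq (hX : Xᵀ * X = 1) (hY : Yᵀ * Y = 1) {v : m → ℝ}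
    {c : n → ℝ} (hYc : Y *ᵥ c = v) (hv : v ≠ 0) :
    trace (Xᵀ * Y) ≤
      (√(∑ i, v i ^ 2))⁻¹ * √(∑ k, (Xᵀ *ᵥ v) k ^ 2) + (Fintype.card n - 1) := by
  set s := √(∑ i, v i ^ 2)
  have hs : s ≠ 0 := (sqrt_sum_sq_pos hv).ne'
  have hc : Yᵀ *ᵥ v = c := by rw [← hYc, mulVec_mulVec, hY, one_mulVec]
  have hcc : c ⬝ᵥ c = s ^ 2 := by
    nth_rewrite 1 [← hc]
    rw [sq_sqrt_sum_sq, mulVec_transpose, ← dotProduct_mulVec, hYc]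
  set u := s⁻¹ • c
  have hu : u ⬝ᵥ u = 1 := by
    rw [smul_dotProduct, dotProduct_smul, hcc, smul_eq_mul, smul_eq_mul]
    field_simp
  have hYu : Y *ᵥ u = s⁻¹ • v := by rw [mulVec_smul, hYc]
  calc trace (Xᵀ * Y) ≤ (X *ᵥ u) ⬝ᵥ (Y *ᵥ u) + (Fintype.card n - 1) :=
        trace_transpose_mul_le_dotProduct_add hX hY hu
    _ = s⁻¹ * (u ⬝ᵥ Xᵀ *ᵥ v) + (Fintype.card n - 1) := by
        rw [hYu, dotProduct_smul, smul_eq_mul, dotProduct_mulVec, vecMul_transpose]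
    _ ≤ s⁻¹ * √(∑ k, (Xᵀ *ᵥ v) k ^ 2) + (Fintype.card n - 1) := by
        gcongr
        exact dotProduct_le_sqrt_sum_sq hu _

end Frobenius

section UpdateDirection

variable {K m n : Type*} [Field K] [Fintype n] [DecidableEq n]

/-- The paper's `Y_*` is `updateDirection X v q_* ‖v‖`: for a unit vector `q` it sends `q` to
`v / s` and agrees with `X` on the orthogonal complement of `q`. -/
def updateDirection (X : Matrix m n K) (v : m → K) (q : n → K) (s : K) : Matrix m n K :=
  s⁻¹ • vecMulVec v q + X * (1 - vecMulVec q q)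

variable {X : Matrix m n K} {v : m → K} {q : n → K} {s : K}

lemma updateDirection_mulVec (hq : q ⬝ᵥ q = 1) : updateDirection X v q s *ᵥ q = s⁻¹ • v := by
  rw [updateDirection, add_mulVec, ← mulVec_mulVec, one_sub_vecMulVec_self_mulVec hq, mulVec_zero,
    add_zero, smul_mulVec, vecMulVec_mulVec, hq, MulOpposite.op_one, one_smul]

variable [Fintype m]

lemma trace_transpose_mul_updateDirection (hX : Xᵀ * X = 1) (hq : q ⬝ᵥ q = 1) :
    trace (Xᵀ * updateDirection X v q s) = s⁻¹ * ((Xᵀ *ᵥ v) ⬝ᵥ q) + (Fintype.card n - 1) := by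
  rw [updateDirection, Matrix.mul_add, Matrix.mul_smul, trace_add, trace_smul, mul_vecMulVec,
    trace_vecMulVec, ← Matrix.mul_assoc, hX, Matrix.one_mul, trace_one_sub_vecMulVec_self hq,
    smul_eq_mul]

lemma transpose_mul_self_updateDirection (hX : Xᵀ * X = 1) (hq : q ⬝ᵥ q = 1) {t : K}
    (hXv : Xᵀ *ᵥ v = t • q) (hv : v ⬝ᵥ v = s ^ 2) (hs : s ≠ 0) :
    (updateDirection X v q s)ᵀ * updateDirection X v q s = 1 := by
  set Q := vecMulVec q q
  have hQ : IsIdempotentElem Q := isIdempotentElem_vecMulVec_self hq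
  set A := s⁻¹ • vecMulVec v q
  set B := X * (1 - Q)
  have hAA : Aᵀ * A = Q := by
    rw [transpose_smul, transpose_vecMulVec, Matrix.smul_mul, Matrix.mul_smul,
      vecMulVec_mul_vecMulVec, hv, vecMulVec_smul, smul_smul, smul_smul,
      show s⁻¹ * s⁻¹ * s ^ 2 = 1 by field_simp, one_smul]
  -- `vᵀX = (Xᵀv)ᵀ` is a multiple of `qᵀ`, which `1 - Q` annihilates
  have hAB : Aᵀ * B = 0 := by
    rw [transpose_smul, transpose_vecMulVec, smul_mul, ← Matrix.mul_assoc, vecMulVec_mul,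
      ← mulVec_transpose, hXv, vecMulVec_smul, Matrix.smul_mul, hQ.mul_one_sub_self, smul_zero,
      smul_zero]
  have hBB : Bᵀ * B = 1 - Q := by
    rw [transpose_mul, transpose_one_sub_vecMulVec_self, Matrix.mul_assoc, ← Matrix.mul_assoc Xᵀ,
      hX, Matrix.one_mul, hQ.one_sub.eq]
  rw [updateDirection, transpose_add, Matrix.add_mul, Matrix.mul_add, Matrix.mul_add, hAA, hAB,
    hBB, ← transpose_transpose (Bᵀ * A), transpose_mul, transpose_transpose, hAB, transpose_zero]
  abel

end UpdateDirection

end Matrix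

theorem stmt_9_general (n q : ℕ)
    (v : Fin n → ℝ)
    (X : Matrix (Fin n) (Fin q) ℝ)
    (hX : Xᵀ * X = 1) (hXv : Xᵀ *ᵥ v ≠ 0)
    (qs : Fin q → ℝ)
    (hqs : qs = fun j => (Xᵀ *ᵥ v) j / Real.sqrt (∑ k, ((Xᵀ *ᵥ v) k) ^ 2))
    (Ys : Matrix (Fin n) (Fin q) ℝ)
    (hYs : Ys = (Real.sqrt (∑ i, v i ^ 2))⁻¹ • vecMulVec v qs +
      X * (1 - vecMulVec qs qs)) :
    (Ysᵀ * Ys = 1 ∧ ∃ c : Fin q → ℝ, Ys *ᵥ c = v) ∧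
    ∀ Y : Matrix (Fin n) (Fin q) ℝ, (Yᵀ * Y = 1 ∧ ∃ c : Fin q → ℝ, Y *ᵥ c = v) →
      Real.sqrt (Matrix.trace ((X - Ys)ᵀ * (X - Ys))) ≤
        Real.sqrt (Matrix.trace ((X - Y)ᵀ * (X - Y))) := by
  replace hYs : Ys = updateDirection X v qs √(∑ i, v i ^ 2) := hYs
  have hv : v ≠ 0 := by
    rintro rfl
    exact hXv (mulVec_zero _)
  have hs := (sqrt_sum_sq_pos hv).ne'
  have hqs1 : qs ⬝ᵥ qs = 1 := hqs ▸ div_sqrt_sum_sq_dotProduct_self hXv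
  have hYs1 : Ysᵀ * Ys = 1 := hYs ▸ transpose_mul_self_updateDirection hX hqs1
    (hqs ▸ (smul_div_sqrt_sum_sq hXv).symm) (sq_sqrt_sum_sq v).symm hs
  refine ⟨⟨hYs1, √(∑ i, v i ^ 2) • qs, ?_⟩, ?_⟩
  · rw [mulVec_smul, hYs, updateDirection_mulVec hqs1, smul_inv_smul₀ hs]
  rintro Y ⟨hY, c, hYc⟩
  refine Real.sqrt_le_sqrt ?_
  have hbound := trace_transpose_mul_le_of_mulVec_eq hX hY hYc hv
  have hattained : trace (Xᵀ * Ys) =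
      (√(∑ i, v i ^ 2))⁻¹ * √(∑ k, (Xᵀ *ᵥ v) k ^ 2) + (Fintype.card (Fin q) - 1) := by
    rw [hYs, trace_transpose_mul_updateDirection hX hqs1, hqs, dotProduct_div_sqrt_sum_sq]
  rw [trace_transpose_sub_mul_sub_of_orthonormal hX hYs1,
    trace_transpose_sub_mul_sub_of_orthonormal hX hY]
  linarith

/-- For `X` with orthonormal columns and `Xᵀv ≠ 0`, setting
`q_* = Xᵀv / ‖Xᵀv‖₂` and `Y_* = v q_*ᵀ / ‖v‖₂ + X (I − q_* q_*ᵀ)`, one has `Y_* ∈ F_v` and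
`‖X − Y_*‖_F ≤ ‖X − Y‖_F` for every `Y ∈ F_v`. -/
theorem stmt_9 (n q : ℕ) (hq : 1 ≤ q) (hnq : q ≤ n)
    (v : Fin n → ℝ) (hv : ∀ i, 0 < v i)
    (X : Matrix (Fin n) (Fin q) ℝ)
    (hX : Xᵀ * X = 1) (hXv : Xᵀ *ᵥ v ≠ 0)
    (qs : Fin q → ℝ)
    (hqs : qs = fun j => (Xᵀ *ᵥ v) j / Real.sqrt (∑ k, ((Xᵀ *ᵥ v) k) ^ 2))
    (Ys : Matrix (Fin n) (Fin q) ℝ)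
    (hYs : Ys = (Real.sqrt (∑ i, v i ^ 2))⁻¹ • vecMulVec v qs +
      X * (1 - vecMulVec qs qs)) :
    (Ysᵀ * Ys = 1 ∧ ∃ c : Fin q → ℝ, Ys *ᵥ c = v) ∧
    ∀ Y : Matrix (Fin n) (Fin q) ℝ, (Yᵀ * Y = 1 ∧ ∃ c : Fin q → ℝ, Y *ᵥ c = v) →
      Real.sqrt (Matrix.trace ((X - Ys)ᵀ * (X - Ys))) ≤
        Real.sqrt (Matrix.trace ((X - Y)ᵀ * (X - Y))) :=
  stmt_9_general n q v X hX hXv qs hqs Ys hYs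
end

section
/- Let n ≥ q ≥ 1 be integers, let v ∈ ℝⁿ have all entries positive, let X ∈ F_v, and let X⊥ be an n×(n−q) real matrix such that (X X⊥) is orthogonal. Then for every V ∈ T_X one has (X + V)ᵀ v ≠ 0. -/
/-!
Write `v = X c`. Orthogonality of `(X X⊥)` gives `Xᵀ v = c` and `X⊥ᵀ v = 0`, so for
`V = X Ω + X⊥ K` the vector `(X + V)ᵀ v` equals `c - Ω c`. A skew-symmetric `Ω` has
`c ⬝ Ω c = 0`, so `Ω c = c` forces `c ⬝ c = 0`, i.e. `c = 0` and hence `v = 0`,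
which contradicts the positivity of `v`.
-/

open Matrix

namespace Matrix

variable {R m n p : Type*}

theorem dotProduct_mulVec_self_eq_zero_of_transpose_eq_neg [Fintype n] [CommRing R]
    [NoZeroDivisors R] [CharZero R] {Ω : Matrix n n R} (hΩ : Ωᵀ = -Ω) (w : n → R) :
    w ⬝ᵥ (Ω *ᵥ w) = 0 := by
  refine self_eq_neg.mp ?_
  calc w ⬝ᵥ (Ω *ᵥ w) = (Ωᵀ *ᵥ w) ⬝ᵥ w := by rw [dotProduct_mulVec, mulVec_transpose]
    _ = -(w ⬝ᵥ (Ω *ᵥ w)) := by rw [hΩ, neg_mulVec, neg_dotProduct, dotProduct_comm]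

theorem eq_zero_of_mulVec_eq_self_of_transpose_eq_neg [Fintype n] [CommRing R] [LinearOrder R]
    [IsStrictOrderedRing R] {Ω : Matrix n n R} (hΩ : Ωᵀ = -Ω) {w : n → R} (hw : Ω *ᵥ w = w) :
    w = 0 := by
  have := dotProduct_mulVec_self_eq_zero_of_transpose_eq_neg hΩ w
  rwa [hw, dotProduct_self_eq_zero] at this

theorem transpose_mul_eq_zero_of_transpose_fromCols_mul_self_eq_one [Fintype p] [CommRing R]
    [DecidableEq m] [DecidableEq n] {X : Matrix p m R} {Y : Matrix p n R}
    (h : (fromCols X Y)ᵀ * fromCols X Y = 1) : Yᵀ * X = 0 := by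
  rw [transpose_fromCols, fromRows_mul_fromCols, ← fromBlocks_one] at h
  simpa only [toBlocks_fromBlocks₂₁] using congrArg toBlocks₂₁ h

theorem transpose_add_mul_add_mul_mulVec [Fintype m] [Fintype n] [Fintype p] [CommRing R]
    {X : Matrix p n R} {Y : Matrix p m R} {Ω : Matrix n n R} (hΩ : Ωᵀ = -Ω) (K : Matrix m n R)
    {v : p → R} (hYv : Yᵀ *ᵥ v = 0) :
    (X + (X * Ω + Y * K))ᵀ *ᵥ v = Xᵀ *ᵥ v - Ω *ᵥ (Xᵀ *ᵥ v) := by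
  simp only [transpose_add, transpose_mul, add_mulVec, ← mulVec_mulVec, hYv, mulVec_zero,
    hΩ, neg_mulVec]
  abel

end Matrix

/-- For `X ∈ F_v` and `X⊥` with `(X X⊥)` orthogonal, every
`V ∈ T_X = {XΩ + X⊥K : Ωᵀ = −Ω, K (Xᵀv) = 0}` satisfies `(X + V)ᵀ v ≠ 0`. -/
theorem stmt_10 (n q : ℕ) (hq : 1 ≤ q) (hnq : q ≤ n)
    (v : Fin n → ℝ) (hv : ∀ i, 0 < v i)
    (X : Matrix (Fin n) (Fin q) ℝ)
    (hX : Xᵀ * X = 1 ∧ ∃ c : Fin q → ℝ, X *ᵥ c = v)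
    (Xp : Matrix (Fin n) (Fin (n - q)) ℝ)
    (hO : (fromCols X Xp)ᵀ * fromCols X Xp = 1)
    (V : Matrix (Fin n) (Fin q) ℝ)
    (hV : ∃ (Ω : Matrix (Fin q) (Fin q) ℝ) (K : Matrix (Fin (n - q)) (Fin q) ℝ),
      Ωᵀ = -Ω ∧ K *ᵥ (Xᵀ *ᵥ v) = 0 ∧ V = X * Ω + Xp * K) :
    (X + V)ᵀ *ᵥ v ≠ 0 := by
  obtain ⟨hXX, c, rfl⟩ := hX
  obtain ⟨Ω, K, hΩ, -, rfl⟩ := hV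
  have hXc : Xᵀ *ᵥ (X *ᵥ c) = c := by rw [mulVec_mulVec, hXX, one_mulVec]
  have hXpc : Xpᵀ *ᵥ (X *ᵥ c) = 0 := by
    rw [mulVec_mulVec, transpose_mul_eq_zero_of_transpose_fromCols_mul_self_eq_one hO,
      zero_mulVec]
  rw [transpose_add_mul_add_mul_mulVec hΩ K hXpc, hXc, sub_ne_zero]
  intro hc
  have hv0 := hv ⟨0, by omega⟩
  rw [eq_zero_of_mulVec_eq_self_of_transpose_eq_neg hΩ hc.symm, mulVec_zero] at hv0
  exact lt_irrefl 0 hv0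
end

section
/- Let n ≥ q ≥ 1 be integers, let v ∈ ℝⁿ have all entries positive, let X ∈ F_v, and let X⊥ be an n×(n−q) real matrix such that (X X⊥) is orthogonal. Let g : ℝ^{n×q} → ℝ be convex and Lipschitz continuous with constant L_g, let ξ ∈ ℝ^{n×q}, let μ > 0, define ℓ(η) = ⟨ξ, η⟩ + (1/(2μ))‖η‖_F² + g(X + η), and let Q be the orthogonal projection of ℝ^{n×q} (with the Frobenius inner product) onto the subspace N_X. Suppose w minimizes ℓ over the affine set {η ∈ ℝ^{n×q} : Qη = Qw}; set ε = Qw and v̂ = w − ε. Then g(X) ≥ ⟨ξ, v̂⟩ + (1/(2μ))‖v̂‖_F² + g(X + v̂) − (2 L_g + ‖ε‖_F/(2μ)) ‖ε‖_F. -/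
/-!
Since `Q` fixes `ε = Q w`, the point `ε` is feasible for the fibre problem, so `ℓ(w) ≤ ℓ(ε)`.
Because `v̂ = w - ε` is orthogonal to `ε`, the quadratic part of `ℓ(v̂ + ε)` splits as
`‖v̂‖² + ‖ε‖²`, and comparing with `ℓ(ε)` leaves
`⟨ξ, v̂⟩ + ‖v̂‖²/(2μ) + g(X + w) ≤ g(X + ε)`.
Moving `X + w` to `X + v̂` and `X + ε` to `X` each costs at most `L_g ‖ε‖` by the Lipschitz bound.
-/

open Matrix

namespace Matrix

variable {m n : Type*} [Fintype m] [Fintype n]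

theorem trace_transpose_mul_symm {R : Type*} [CommRing R] (A B : Matrix m n R) :
    trace (Aᵀ * B) = trace (Bᵀ * A) := by
  rw [← trace_transpose, transpose_mul, transpose_transpose]

theorem trace_add_transpose_mul_add_of_orthogonal {A B : Matrix m n ℝ}
    (h : trace (Aᵀ * B) = 0) :
    trace ((A + B)ᵀ * (A + B)) = trace (Aᵀ * A) + trace (Bᵀ * B) := by
  have h' : trace (Bᵀ * A) = 0 := by rw [trace_transpose_mul_symm, h]
  simp only [transpose_add, Matrix.add_mul, Matrix.mul_add, trace_add, h, h']
  ring

end Matrix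

section ProxObjective

variable {m n : Type*} [Fintype m] [Fintype n]

noncomputable def proxObjective (ξ X : Matrix m n ℝ) (μ : ℝ) (g : Matrix m n ℝ → ℝ)
    (η : Matrix m n ℝ) : ℝ :=
  trace (ξᵀ * η) + (1 / (2 * μ)) * trace (ηᵀ * η) + g (X + η)

theorem proxObjective_add_sub_of_orthogonal (ξ X : Matrix m n ℝ) (μ : ℝ)
    (g : Matrix m n ℝ → ℝ) {a b : Matrix m n ℝ} (h : trace (aᵀ * b) = 0) :
    proxObjective ξ X μ g (a + b) - proxObjective ξ X μ g b =
      trace (ξᵀ * a) + (1 / (2 * μ)) * trace (aᵀ * a) + g (X + (a + b)) - g (X + b) := by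
  rw [proxObjective, proxObjective, trace_add_transpose_mul_add_of_orthogonal h, Matrix.mul_add,
    trace_add]
  ring

end ProxObjective

theorem stmt_14_general (n q : ℕ)
    (X : Matrix (Fin n) (Fin q) ℝ)
    (Nset : Set (Matrix (Fin n) (Fin q) ℝ))
    (g : Matrix (Fin n) (Fin q) ℝ → ℝ)
    (Lg : ℝ)
    (hLip : ∀ U V : Matrix (Fin n) (Fin q) ℝ,
      |g U - g V| ≤ Lg * Real.sqrt (Matrix.trace ((U - V)ᵀ * (U - V))))
    (ξ : Matrix (Fin n) (Fin q) ℝ) (μ : ℝ) (hμ : 0 < μ)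
    (l : Matrix (Fin n) (Fin q) ℝ → ℝ)
    (hl : l = fun η => Matrix.trace (ξᵀ * η) +
      (1 / (2 * μ)) * Matrix.trace (ηᵀ * η) + g (X + η))
    (Q : Matrix (Fin n) (Fin q) ℝ →ₗ[ℝ] Matrix (Fin n) (Fin q) ℝ)
    (hQmem : ∀ z, Q z ∈ Nset)
    (hQid : ∀ z ∈ Nset, Q z = z)
    (hQorth : ∀ z, ∀ u ∈ Nset, Matrix.trace ((z - Q z)ᵀ * u) = 0)
    (w : Matrix (Fin n) (Fin q) ℝ)
    (hwmin : ∀ η : Matrix (Fin n) (Fin q) ℝ, Q η = Q w → l w ≤ l η)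
    (ε vh : Matrix (Fin n) (Fin q) ℝ) (hε : ε = Q w) (hvh : vh = w - ε) :
    Matrix.trace (ξᵀ * vh) + (1 / (2 * μ)) * Matrix.trace (vhᵀ * vh) + g (X + vh) -
        (2 * Lg + Real.sqrt (Matrix.trace (εᵀ * ε)) / (2 * μ)) *
          Real.sqrt (Matrix.trace (εᵀ * ε)) ≤
      g X := by
  have hl' : l = proxObjective ξ X μ g := hl
  have hw : w = vh + ε := by rw [hvh, sub_add_cancel]
  have horth : trace (vhᵀ * ε) = 0 := hvh ▸ hε ▸ hQorth w (Q w) (hQmem w)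
  have hmin : l w ≤ l ε := hwmin ε (by rw [hε, hQid _ (hQmem w)])
  have hsplit := proxObjective_add_sub_of_orthogonal ξ X μ g horth
  rw [hl', hw] at hmin
  set s := Real.sqrt (trace (εᵀ * ε))
  have hmove_w : g (X + vh) ≤ g (X + (vh + ε)) + Lg * s := by
    have := (abs_le.mp (hLip (X + vh) (X + (vh + ε)))).2
    have hdiff : X + vh - (X + (vh + ε)) = -ε := by abel
    rw [hdiff, transpose_neg, Matrix.neg_mul, Matrix.mul_neg, neg_neg] at this
    linarith
  have hmove_ε : g (X + ε) ≤ g X + Lg * s := by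
    have := (abs_le.mp (hLip (X + ε) X)).2
    rw [add_sub_cancel_left] at this
    linarith
  have hslack : 0 ≤ s / (2 * μ) * s := by positivity
  linarith

/-- Let `g` be convex and Lipschitz with constant `L_g`, let `Q` be the
Frobenius-orthogonal projection onto `N_X`, and suppose `w` minimizes
`ℓ(η) = ⟨ξ, η⟩ + (1/(2μ))‖η‖_F² + g(X + η)` over `{η : Qη = Qw}`. With `ε = Qw` and
`v̂ = w − ε`, one has
`g(X) ≥ ⟨ξ, v̂⟩ + (1/(2μ))‖v̂‖_F² + g(X + v̂) − (2L_g + ‖ε‖_F/(2μ))‖ε‖_F`. -/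
theorem stmt_14 (n q : ℕ) (hq : 1 ≤ q) (hnq : q ≤ n)
    (v : Fin n → ℝ) (hv : ∀ i, 0 < v i)
    (X : Matrix (Fin n) (Fin q) ℝ)
    (hX : Xᵀ * X = 1 ∧ ∃ c : Fin q → ℝ, X *ᵥ c = v)
    (Xp : Matrix (Fin n) (Fin (n - q)) ℝ)
    (hO : (fromCols X Xp)ᵀ * fromCols X Xp = 1)
    (Nset : Set (Matrix (Fin n) (Fin q) ℝ))
    (hN : Nset = {U | ∃ (S : Matrix (Fin q) (Fin q) ℝ) (u : Fin (n - q) → ℝ),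
      Sᵀ = S ∧ U = X * S + vecMulVec (Xp *ᵥ u) (v ᵥ* X)})
    (g : Matrix (Fin n) (Fin q) ℝ → ℝ) (hg : ConvexOn ℝ Set.univ g)
    (Lg : ℝ)
    (hLip : ∀ U V : Matrix (Fin n) (Fin q) ℝ,
      |g U - g V| ≤ Lg * Real.sqrt (Matrix.trace ((U - V)ᵀ * (U - V))))
    (ξ : Matrix (Fin n) (Fin q) ℝ) (μ : ℝ) (hμ : 0 < μ)
    (l : Matrix (Fin n) (Fin q) ℝ → ℝ)
    (hl : l = fun η => Matrix.trace (ξᵀ * η) +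
      (1 / (2 * μ)) * Matrix.trace (ηᵀ * η) + g (X + η))
    (Q : Matrix (Fin n) (Fin q) ℝ →ₗ[ℝ] Matrix (Fin n) (Fin q) ℝ)
    (hQmem : ∀ z, Q z ∈ Nset)
    (hQid : ∀ z ∈ Nset, Q z = z)
    (hQorth : ∀ z, ∀ u ∈ Nset, Matrix.trace ((z - Q z)ᵀ * u) = 0)
    (w : Matrix (Fin n) (Fin q) ℝ)
    (hwmin : ∀ η : Matrix (Fin n) (Fin q) ℝ, Q η = Q w → l w ≤ l η)
    (ε vh : Matrix (Fin n) (Fin q) ℝ) (hε : ε = Q w) (hvh : vh = w - ε) :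
    Matrix.trace (ξᵀ * vh) + (1 / (2 * μ)) * Matrix.trace (vhᵀ * vh) + g (X + vh) -
        (2 * Lg + Real.sqrt (Matrix.trace (εᵀ * ε)) / (2 * μ)) *
          Real.sqrt (Matrix.trace (εᵀ * ε)) ≤
      g X :=
  stmt_14_general n q X Nset g Lg hLip ξ μ hμ l hl Q hQmem hQid hQorth w hwmin ε vh hε hvh
end
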